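/- Let θ ∈ (0, 1/2), and let v : [0,1] → ℝ be positive and continuous with v = ρ⁻¹ for a positive C¹ function ρ. Assume ∫₀¹ v(y) dy ≤ 1 and ‖(ρ^θ)'‖_{L²(0,1)} ≤ K. Then max_{y∈[0,1]} v(y) ≤ 1 + (1/2) max_{y∈[0,1]} v(y) + C·K^{2/(1-2θ)} for some constant C depending only on θ; consequently max v ≤ 2 + 2C·K^{2/(1-2θ)}, i.e., ρ is bounded below by a positive constant depending only on θ and K. -/

import Mathlib

open MeasureTheory intervalIntegral Set Real

private lemma amgm_aux {a b t : ℝ} (ht : 0 < t) :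
    a * b ≤ t/2 * a^2 + 1/(2*t) * b^2 := by
  have h : t/2 * a^2 + 1/(2*t) * b^2 - a * b = (t*a - b)^2/(2*t) := by
    field_simp
    ring
  nlinarith [div_nonneg (sq_nonneg (t*a - b)) (by linarith : (0:ℝ) ≤ 2*t)]

set_option maxHeartbeats 1000000 in
/-- Lower bound of the density: for `θ ∈ (0,1/2)` there is a constant `C = C(θ)` such that
for any positive `C¹` density `ρ` on `[0,1]` with `v = ρ⁻¹` satisfying `∫₀¹ v ≤ 1` and
`‖(ρ^θ)'‖_{L²} ≤ K`, the maximum `M` of `v` on `[0,1]` satisfies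
`M ≤ 1 + M/2 + C K^{2/(1-2θ)}`, hence `M ≤ 2 + 2 C K^{2/(1-2θ)}`;
i.e. `ρ` is bounded below by a positive constant depending only on `θ` and `K`. -/
theorem stmt_3 (θ : ℝ) (hθ : θ ∈ Set.Ioo (0:ℝ) (1/2)) :
    ∃ C : ℝ, 0 < C ∧
      ∀ (ρ v : ℝ → ℝ) (K : ℝ), 0 ≤ K →
        (∀ y ∈ Set.Icc (0:ℝ) 1, 0 < ρ y) →
        (∀ y ∈ Set.Icc (0:ℝ) 1, v y = (ρ y)⁻¹) →
        ContinuousOn v (Set.Icc 0 1) →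
        (∀ y ∈ Set.Icc (0:ℝ) 1, HasDerivAt ρ (deriv ρ y) y) →
        ContinuousOn (deriv ρ) (Set.Icc 0 1) →
        (∫ y in (0:ℝ)..1, v y) ≤ 1 →
        (∫ y in (0:ℝ)..1, (deriv (fun y => ρ y ^ θ) y) ^ 2) ≤ K ^ 2 →
        (sSup (v '' Set.Icc 0 1) ≤
            1 + (1/2) * sSup (v '' Set.Icc 0 1) + C * K ^ (2 / (1 - 2*θ)) ∧
          sSup (v '' Set.Icc 0 1) ≤ 2 + 2 * C * K ^ (2 / (1 - 2*θ))) := by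
  obtain ⟨hθ0, hθ2⟩ := hθ
  have h2θ : (0:ℝ) < 2*θ := by linarith
  have h12θ : (0:ℝ) < 1 - 2*θ := by linarith
  set p : ℝ := (2*θ)⁻¹ with hpdef
  set q : ℝ := (1 - 2*θ)⁻¹ with hqdef
  have hp0 : 0 < p := by positivity
  have hq0 : 0 < q := by positivity
  have hp1 : 1 < p := by
    rw [hpdef, lt_inv_comm₀ one_pos h2θ]
    linarith
  set ε : ℝ := (p/4) ^ (p⁻¹) with hεdef
  have hεpos : 0 < ε := Real.rpow_pos_of_pos (by positivity) _
  refine ⟨θ ^ (-(2*q)) * ε ^ (-q) / q, ?_, ?_⟩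
  · exact div_pos (mul_pos (Real.rpow_pos_of_pos hθ0 _) (Real.rpow_pos_of_pos hεpos _)) hq0
  intro ρ v K hK hρpos hv hvcont hρd hρ'c hintv hintK
  set C : ℝ := θ ^ (-(2*q)) * ε ^ (-q) / q with hCdef
  have hCpos : 0 < C :=
    div_pos (mul_pos (Real.rpow_pos_of_pos hθ0 _) (Real.rpow_pos_of_pos hεpos _)) hq0
  set M : ℝ := sSup (v '' Set.Icc 0 1) with hMdef
  set w : ℝ → ℝ := fun y => (ρ y)⁻¹ with hwdef
  have hEq : EqOn v w (Set.Icc 0 1) := fun y hy => hv y hy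
  have hwc : ContinuousOn w (Set.Icc 0 1) := hvcont.congr hEq.symm
  have himg : v '' Set.Icc 0 1 = w '' Set.Icc 0 1 := image_congr hEq
  have hMw : M = sSup (w '' Set.Icc 0 1) := by rw [hMdef, himg]
  have huIcc : Set.uIcc (0:ℝ) 1 = Set.Icc 0 1 := uIcc_of_le zero_le_one
  have hcomp : IsCompact (w '' Set.Icc 0 1) := isCompact_Icc.image_of_continuousOn hwc
  have hne : (Set.Icc (0:ℝ) 1).Nonempty := nonempty_Icc.2 zero_le_one
  have hub : ∀ y ∈ Set.Icc (0:ℝ) 1, w y ≤ M := fun y hy =>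
    hMw ▸ le_csSup hcomp.bddAbove (mem_image_of_mem w hy)
  obtain ⟨y₀, hy₀, hwy₀⟩ : ∃ y₀ ∈ Set.Icc (0:ℝ) 1, w y₀ = M := by
    have h := hcomp.sSup_mem (hne.image w)
    rw [← hMw] at h
    obtain ⟨y₀, h1, h2⟩ := h
    exact ⟨y₀, h1, h2⟩
  have hwpos : ∀ y ∈ Set.Icc (0:ℝ) 1, 0 < w y := fun y hy => inv_pos.2 (hρpos y hy)
  have h0mem : (0:ℝ) ∈ Set.Icc (0:ℝ) 1 := Set.mem_Icc.2 ⟨le_refl 0, zero_le_one⟩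
  have hMpos : 0 < M := lt_of_lt_of_le (hwpos 0 h0mem) (hub 0 h0mem)
  have hρc : ContinuousOn ρ (Set.Icc 0 1) := fun y hy =>
    (hρd y hy).continuousAt.continuousWithinAt
  -- derivative of w
  set φ : ℝ → ℝ := fun y => -deriv ρ y / ρ y ^ 2 with hφdef
  have hφd : ∀ y ∈ Set.Icc (0:ℝ) 1, HasDerivAt w (φ y) y := fun y hy =>
    (hρd y hy).inv (hρpos y hy).ne'
  have hφc : ContinuousOn φ (Set.Icc 0 1) :=
    (hρ'c.neg).div (hρc.pow 2) (fun y hy => pow_ne_zero 2 (hρpos y hy).ne')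
  -- the function g = (ρ^θ)'
  set g : ℝ → ℝ := fun y => deriv (fun z => ρ z ^ θ) y with hgdef
  have hgeq : ∀ y ∈ Set.Icc (0:ℝ) 1, g y = deriv ρ y * θ * ρ y ^ (θ - 1) := fun y hy =>
    ((hρd y hy).rpow_const (Or.inl (hρpos y hy).ne')).deriv
  have hgc : ContinuousOn g (Set.Icc 0 1) := by
    have h : ContinuousOn (fun y => deriv ρ y * θ * ρ y ^ (θ-1)) (Set.Icc 0 1) :=
      (hρ'c.mul continuousOn_const).mul
        (hρc.rpow_const fun y hy => Or.inl (hρpos y hy).ne')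
    exact h.congr hgeq
  have hintK' : (∫ y in (0:ℝ)..1, (g y)^2) ≤ K^2 := hintK
  -- ∫ w ≤ 1
  have hwcu : ContinuousOn w (Set.uIcc (0:ℝ) 1) := by rw [huIcc]; exact hwc
  have hwi : IntervalIntegrable w volume 0 1 := hwcu.intervalIntegrable
  have hintw : (∫ y in (0:ℝ)..1, w y) ≤ 1 := by
    rw [intervalIntegral.integral_congr (g := v) (by rw [huIcc]; exact hEq.symm)]
    exact hintv
  -- there is a point where w ≤ 1
  obtain ⟨y₁, hy₁, hwy₁⟩ : ∃ y₁ ∈ Set.Icc (0:ℝ) 1, w y₁ ≤ 1 := by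
    by_contra hcon
    push_neg at hcon
    obtain ⟨ym, hym, hmin⟩ := isCompact_Icc.exists_isMinOn hne hwc
    have h1 : (1:ℝ) < w ym := hcon ym hym
    have h2 : w ym ≤ ∫ y in (0:ℝ)..1, w y := by
      have h3 := intervalIntegral.integral_mono_on zero_le_one
        (_root_.intervalIntegrable_const (c := w ym)) hwi
        (fun x hx => isMinOn_iff.mp hmin x hx)
      simpa using h3
    linarith
  -- FTC
  have hsub : Set.uIcc y₁ y₀ ⊆ Set.Icc (0:ℝ) 1 := by
    rw [Set.uIcc]
    exact Set.Icc_subset_Icc (le_min hy₁.1 hy₀.1) (max_le hy₁.2 hy₀.2)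
  have hφcu : ContinuousOn φ (Set.uIcc (0:ℝ) 1) := by rw [huIcc]; exact hφc
  have hφi : IntervalIntegrable φ volume 0 1 := hφcu.intervalIntegrable
  have habsφi : IntervalIntegrable (fun y => |φ y|) volume 0 1 := hφcu.abs.intervalIntegrable
  have hFTC : ∫ y in y₁..y₀, φ y = w y₀ - w y₁ :=
    intervalIntegral.integral_eq_sub_of_hasDerivAt (fun y hy => hφd y (hsub hy))
      ((hφc.mono hsub).intervalIntegrable)
  have hIbound : w y₀ - w y₁ ≤ ∫ y in (0:ℝ)..1, |φ y| := by
    rw [← hFTC]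
    rcases le_total y₁ y₀ with h | h
    · calc ∫ y in y₁..y₀, φ y ≤ ∫ y in y₁..y₀, |φ y| :=
            intervalIntegral.integral_mono_on h ((hφc.mono hsub).intervalIntegrable)
              ((hφc.mono hsub).abs.intervalIntegrable) (fun x _ => le_abs_self _)
        _ ≤ ∫ y in (0:ℝ)..1, |φ y| :=
            intervalIntegral.integral_mono_interval hy₁.1 h hy₀.2
              (Filter.Eventually.of_forall fun x => abs_nonneg _) habsφi
    · have hsub' : Set.uIcc y₀ y₁ ⊆ Set.Icc (0:ℝ) 1 := by
        rw [Set.uIcc]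
        exact Set.Icc_subset_Icc (le_min hy₀.1 hy₁.1) (max_le hy₀.2 hy₁.2)
      calc ∫ y in y₁..y₀, φ y = ∫ y in y₀..y₁, (-φ y) := by
            rw [intervalIntegral.integral_neg, ← intervalIntegral.integral_symm]
        _ ≤ ∫ y in y₀..y₁, |φ y| :=
            intervalIntegral.integral_mono_on h
              ((hφc.mono hsub').intervalIntegrable).neg
              ((hφc.mono hsub').abs.intervalIntegrable) (fun x _ => neg_le_abs _)
        _ ≤ ∫ y in (0:ℝ)..1, |φ y| :=
            intervalIntegral.integral_mono_interval hy₀.1 h hy₁.2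
              (Filter.Eventually.of_forall fun x => abs_nonneg _) habsφi
  have hM1 : M ≤ 1 + ∫ y in (0:ℝ)..1, |φ y| := by
    have := hwy₀
    linarith [hIbound, hwy₁]
  -- pointwise bound
  set c : ℝ := θ⁻¹ * M ^ (θ + 1/2) with hcdef
  have hcpos : 0 < c := mul_pos (inv_pos.2 hθ0) (Real.rpow_pos_of_pos hMpos _)
  have hpt : ∀ t, 0 < t → ∀ y ∈ Set.Icc (0:ℝ) 1,
      |φ y| ≤ t/2 * w y + c^2/(2*t) * (g y)^2 := by
    intro t ht y hy
    have hr : 0 < ρ y := hρpos y hy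
    have hwy : 0 < w y := hwpos y hy
    have hwyM : w y ≤ M := hub y hy
    have hinv : θ * θ⁻¹ = 1 := mul_inv_cancel₀ hθ0.ne'
    have habs_g : |g y| = |deriv ρ y| * θ * ρ y ^ (θ-1) := by
      rw [hgeq y hy, abs_mul, abs_mul, abs_of_pos hθ0,
        abs_of_pos (Real.rpow_pos_of_pos hr _)]
    have h2 : ρ y ^ (1-θ) * ρ y ^ (θ-1) = 1 := by
      rw [← Real.rpow_add hr]
      norm_num
    have hder_abs : |deriv ρ y| = θ⁻¹ * ρ y ^ (1-θ) * |g y| := by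
      rw [habs_g]
      linear_combination (-(|deriv ρ y| * θ * θ⁻¹)) * h2 - |deriv ρ y| * hinv
    have h3 : |φ y| = |deriv ρ y| / ρ y ^ 2 := by
      show |(-deriv ρ y / ρ y ^ 2)| = _
      rw [abs_div, abs_neg, abs_of_pos (pow_pos hr 2)]
    have h4 : w y ^ (1+θ) = (ρ y ^ 2)⁻¹ * ρ y ^ (1-θ) := by
      have e1 : w y ^ (1+θ) = ρ y ^ (-(1+θ)) := by
        rw [show w y = (ρ y)⁻¹ from rfl, Real.rpow_neg hr.le]
        exact Real.inv_rpow hr.le _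
      have e2 : (ρ y ^ 2)⁻¹ * ρ y ^ (1-θ) = ρ y ^ (-(1+θ)) := by
        rw [← Real.rpow_natCast (ρ y) 2, ← Real.rpow_neg hr.le, ← Real.rpow_add hr]
        congr 1
        push_cast
        ring
      rw [e1, e2]
    have hrne : (ρ y)^2 ≠ 0 := (pow_pos hr 2).ne'
    have hφabs : |φ y| = θ⁻¹ * w y ^ (1+θ) * |g y| := by
      rw [h3, hder_abs, h4]
      field_simp
    have h5 : w y ^ (1+θ) ≤ M ^ (θ+1/2) * w y ^ ((1:ℝ)/2) := by
      have e3 : w y ^ (1+θ) = w y ^ (θ+1/2) * w y ^ ((1:ℝ)/2) := by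
        rw [← Real.rpow_add hwy]
        congr 1
        ring
      rw [e3]
      exact mul_le_mul_of_nonneg_right
        (Real.rpow_le_rpow hwy.le hwyM (by linarith)) (Real.rpow_nonneg hwy.le _)
    have h6 : |φ y| ≤ (w y ^ ((1:ℝ)/2)) * (c * |g y|) := by
      rw [hφabs, hcdef]
      calc θ⁻¹ * w y ^ (1+θ) * |g y|
          ≤ θ⁻¹ * (M ^ (θ+1/2) * w y ^ ((1:ℝ)/2)) * |g y| := by
            have := mul_le_mul_of_nonneg_left h5 (inv_pos.2 hθ0).le
            exact mul_le_mul_of_nonneg_right this (abs_nonneg _)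
        _ = (w y ^ ((1:ℝ)/2)) * (θ⁻¹ * M ^ (θ+1/2) * |g y|) := by ring
    have ha2 : (w y ^ ((1:ℝ)/2)) ^ 2 = w y := by
      rw [← Real.rpow_natCast (w y ^ ((1:ℝ)/2)) 2, ← Real.rpow_mul hwy.le]
      norm_num
    have hb2 : (c * |g y|)^2 = c^2 * (g y)^2 := by rw [mul_pow, sq_abs]
    calc |φ y| ≤ (w y ^ ((1:ℝ)/2)) * (c * |g y|) := h6
      _ ≤ t/2 * (w y ^ ((1:ℝ)/2))^2 + 1/(2*t) * (c * |g y|)^2 := amgm_aux ht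
      _ = t/2 * w y + c^2/(2*t) * (g y)^2 := by rw [ha2, hb2]; ring
  -- integrated bound
  have hgcu : ContinuousOn g (Set.uIcc (0:ℝ) 1) := by rw [huIcc]; exact hgc
  have hkey : ∀ t, 0 < t → M ≤ 1 + (t/2 + c^2/(2*t) * K^2) := by
    intro t ht
    have hRHSc : ContinuousOn (fun y => t/2 * w y + c^2/(2*t) * (g y)^2)
        (Set.uIcc (0:ℝ) 1) :=
      (continuousOn_const.mul hwcu).add (continuousOn_const.mul (hgcu.pow 2))
    have hint1 : (∫ y in (0:ℝ)..1, |φ y|)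
        ≤ ∫ y in (0:ℝ)..1, (t/2 * w y + c^2/(2*t) * (g y)^2) :=
      intervalIntegral.integral_mono_on zero_le_one habsφi hRHSc.intervalIntegrable
        (fun y hy => hpt t ht y hy)
    have hint2 : (∫ y in (0:ℝ)..1, (t/2 * w y + c^2/(2*t) * (g y)^2))
        = t/2 * (∫ y in (0:ℝ)..1, w y) + c^2/(2*t) * (∫ y in (0:ℝ)..1, (g y)^2) := by
      rw [intervalIntegral.integral_add (f := fun y => t/2 * w y)
        (g := fun y => c^2/(2*t) * (g y)^2) ((continuousOn_const.mul hwcu).intervalIntegrable)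
        ((continuousOn_const.mul (hgcu.pow 2)).intervalIntegrable),
        intervalIntegral.integral_const_mul, intervalIntegral.integral_const_mul]
    have h7 : t/2 * (∫ y in (0:ℝ)..1, w y) ≤ t/2 * 1 :=
      mul_le_mul_of_nonneg_left hintw (by positivity)
    have h8 : c^2/(2*t) * (∫ y in (0:ℝ)..1, (g y)^2) ≤ c^2/(2*t) * K^2 :=
      mul_le_mul_of_nonneg_left hintK' (by positivity)
    have := hint2 ▸ hint1
    linarith [hM1]
  -- final: case split on K
  rcases eq_or_lt_of_le hK with hK0 | hKpos
  · -- K = 0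
    have hKX : K ^ (2/(1-2*θ)) = 0 := by
      rw [← hK0]
      exact Real.zero_rpow (by positivity)
    have hMle1 : M ≤ 1 := by
      by_contra hcon
      push_neg at hcon
      have := hkey (M - 1) (by linarith)
      rw [← hK0] at this
      nlinarith
    rw [hKX]
    constructor <;> nlinarith [hCpos, hMpos]
  · -- K > 0
    have hMθ : 0 < M^(2*θ) := Real.rpow_pos_of_pos hMpos _
    have h2i : (0:ℝ) < 2 * θ⁻¹^2 := by positivity
    have ht : (0:ℝ) < 2 * θ⁻¹^2 * M^(2*θ) * K^2 :=
      mul_pos (mul_pos h2i hMθ) (pow_pos hKpos 2)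
    have hc2 : c^2 = θ⁻¹^2 * (M^(2*θ) * M) := by
      rw [hcdef, mul_pow]
      congr 1
      rw [← Real.rpow_natCast (M ^ (θ+1/2)) 2, ← Real.rpow_mul hMpos.le,
        show ((θ+1/2)*((2:ℕ):ℝ)) = 2*θ + 1 by push_cast; ring,
        Real.rpow_add hMpos, Real.rpow_one]
    have hmain := hkey (2 * θ⁻¹^2 * M^(2*θ) * K^2) ht
    have hθine : θ⁻¹ ≠ 0 := inv_ne_zero hθ0.ne'
    have hM2θne : M^(2*θ) ≠ 0 := hMθ.ne'
    have hKne : K ≠ 0 := hKpos.ne'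
    have heval : (2 * θ⁻¹^2 * M^(2*θ) * K^2)/2
        + c^2/(2*(2 * θ⁻¹^2 * M^(2*θ) * K^2)) * K^2
        = θ⁻¹^2 * M^(2*θ) * K^2 + M/4 := by
      rw [hc2]
      field_simp
      ring
    rw [heval] at hmain
    -- Young's inequality step
    have hconj : Real.HolderConjugate p q := by
      constructor
      · rw [hpdef, hqdef, inv_inv, inv_inv, inv_one]; ring
      · exact hp0
      · exact hq0
    have hεp : ε ^ p = p/4 := by
      rw [hεdef, ← Real.rpow_mul (by positivity), inv_mul_cancel₀ hp0.ne', Real.rpow_one]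
    have hyoung : θ⁻¹^2 * M^(2*θ) * K^2 ≤ M/4 + C * K^(2/(1-2*θ)) := by
      have h9 := Real.young_inequality_of_nonneg
        (a := ε * M^(2*θ)) (b := θ⁻¹^2 * K^2 / ε)
        (by positivity) (by positivity) hconj
      have e1 : ε * M^(2*θ) * (θ⁻¹^2 * K^2 / ε) = θ⁻¹^2 * M^(2*θ) * K^2 := by
        field_simp
      have e2 : (ε * M^(2*θ))^p / p = M/4 := by
        rw [Real.mul_rpow hεpos.le (Real.rpow_nonneg hMpos.le _), hεp,
          ← Real.rpow_mul hMpos.le,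
          show 2*θ*p = 1 by rw [hpdef]; exact mul_inv_cancel₀ h2θ.ne', Real.rpow_one]
        field_simp
      have e3 : (θ⁻¹^2 * K^2 / ε)^q / q = C * K^(2/(1-2*θ)) := by
        rw [div_eq_mul_inv (θ⁻¹^2 * K^2) ε,
          Real.mul_rpow (by positivity) (by positivity),
          Real.mul_rpow (by positivity) (by positivity)]
        have f1 : (θ⁻¹^2 : ℝ)^q = θ ^ (-(2*q)) := by
          rw [inv_pow, ← Real.rpow_natCast θ 2, ← Real.rpow_neg hθ0.le,
            ← Real.rpow_mul hθ0.le]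
          congr 1
          push_cast
          ring
        have f2 : ((K^2 : ℝ))^q = K ^ (2/(1-2*θ)) := by
          rw [← Real.rpow_natCast K 2, ← Real.rpow_mul hK]
          congr 1
        have f3 : (ε⁻¹ : ℝ)^q = ε ^ (-q) := by
          rw [Real.rpow_neg hεpos.le, Real.inv_rpow hεpos.le]
        rw [f1, f2, f3, hCdef]
        ring
      calc θ⁻¹^2 * M^(2*θ) * K^2 = ε * M^(2*θ) * (θ⁻¹^2 * K^2 / ε) := e1.symm
        _ ≤ (ε * M^(2*θ))^p / p + (θ⁻¹^2 * K^2 / ε)^q / q := h9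
        _ = M/4 + C * K^(2/(1-2*θ)) := by rw [e2, e3]
    constructor
    · linarith
    · linarith
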